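/- arXiv:1805.03638 — 3 statements merged into one kernel-verified Lean document; each statement's English description precedes it below -/
import Mathlib

section
/- If w : D → C is analytic on the open unit disk with |w(ζ)| ≤ 1 for all ζ, and the liminf of (1 - |w(ζ)|²)/(1 - |ζ|²) as ζ → t₀ (with t₀ on the unit circle, ζ in the disk) equals 0, then w is a constant function of modulus 1. -/
/-!
If `‖w‖` reaches `1` inside the disk, the maximum modulus principle makes `w` constant.
Otherwise `w` maps the disk into itself, and composing it with the disk automorphism sending
`a = w 0` to `0` puts it under the Schwarz lemma; unwinding the Möbius identity
`‖1 - ā u‖² - ‖u - a‖² = (1 - ‖a‖²)(1 - ‖u‖²)` gives the uniform bound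
`(1 - ‖w ζ‖²) / (1 - ‖ζ‖²) ≥ (1 - ‖a‖) / (1 + ‖a‖) > 0` on the whole disk,
so the liminf cannot vanish.
-/

open Metric Topology Filter ComplexConjugate

namespace Complex

theorem norm_one_sub_conj_mul_sq_sub_norm_sub_sq (a u : ℂ) :
    ‖1 - conj a * u‖ ^ 2 - ‖u - a‖ ^ 2 = (1 - ‖a‖ ^ 2) * (1 - ‖u‖ ^ 2) := by
  simp only [Complex.sq_norm, normSq_apply, sub_re, sub_im, one_re, one_im, mul_re, mul_im,
    conj_re, conj_im]
  ring

theorem norm_sub_lt_norm_one_sub_conj_mul {a u : ℂ} (ha : ‖a‖ < 1) (hu : ‖u‖ < 1) :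
    ‖u - a‖ < ‖1 - conj a * u‖ := by
  have hid := norm_one_sub_conj_mul_sq_sub_norm_sub_sq a u
  have hpos : 0 < (1 - ‖a‖ ^ 2) * (1 - ‖u‖ ^ 2) := by
    apply mul_pos <;> nlinarith [norm_nonneg a, norm_nonneg u]
  exact lt_of_pow_lt_pow_left₀ 2 (norm_nonneg _) (by linarith)

theorem one_sub_norm_le_norm_one_sub_conj_mul (a : ℂ) {u : ℂ} (hu : ‖u‖ ≤ 1) :
    1 - ‖a‖ ≤ ‖1 - conj a * u‖ :=
  calc 1 - ‖a‖ ≤ ‖(1 : ℂ)‖ - ‖conj a * u‖ := by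
        rw [norm_one, norm_mul, RCLike.norm_conj]
        nlinarith [norm_nonneg a]
    _ ≤ ‖1 - conj a * u‖ := norm_sub_norm_le _ _

/-- The Schwarz lemma for `(w - a) / (1 - ā w)`, `a = w 0`, cleared of denominators. -/
theorem norm_sub_le_mul_norm_one_sub_conj_mul_of_mapsTo_ball {w : ℂ → ℂ}
    (hw : DifferentiableOn ℂ w (ball 0 1)) (hmaps : Set.MapsTo w (ball 0 1) (ball 0 1))
    {ζ : ℂ} (hζ : ζ ∈ ball (0 : ℂ) 1) :
    ‖w ζ - w 0‖ ≤ ‖ζ‖ * ‖1 - conj (w 0) * w ζ‖ := by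
  set a := w 0
  have ha : ‖a‖ < 1 := mem_ball_zero_iff.1 (hmaps (mem_ball_self one_pos))
  have hlt : ∀ z ∈ ball (0 : ℂ) 1, ‖w z - a‖ < ‖1 - conj a * w z‖ := fun z hz =>
    norm_sub_lt_norm_one_sub_conj_mul ha (mem_ball_zero_iff.1 (hmaps hz))
  have hden : ∀ z ∈ ball (0 : ℂ) 1, 1 - conj a * w z ≠ 0 := fun z hz =>
    norm_pos_iff.1 ((norm_nonneg _).trans_lt (hlt z hz))
  set g : ℂ → ℂ := fun z => (w z - a) / (1 - conj a * w z)
  have hgd : DifferentiableOn ℂ g (ball 0 1) :=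
    (hw.sub_const a).div ((differentiableOn_const _).sub ((differentiableOn_const _).mul hw)) hden
  have hgmaps : Set.MapsTo g (ball 0 1) (closedBall 0 1) := fun z hz => by
    rw [mem_closedBall_zero_iff, norm_div]
    exact div_le_one_of_le₀ (hlt z hz).le (norm_nonneg _)
  have hschwarz : ‖g ζ‖ ≤ ‖ζ‖ :=
    norm_le_norm_of_mapsTo_ball hgd hgmaps (by simp [g, a]) (mem_ball_zero_iff.1 hζ)
  rwa [norm_div, div_le_iff₀ (norm_pos_iff.2 (hden ζ hζ))] at hschwarz

theorem div_le_one_sub_norm_sq_div_of_mapsTo_ball {w : ℂ → ℂ}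
    (hw : DifferentiableOn ℂ w (ball 0 1)) (hmaps : Set.MapsTo w (ball 0 1) (ball 0 1))
    {ζ : ℂ} (hζ : ζ ∈ ball (0 : ℂ) 1) :
    (1 - ‖w 0‖) / (1 + ‖w 0‖) ≤ (1 - ‖w ζ‖ ^ 2) / (1 - ‖ζ‖ ^ 2) := by
  set a := w 0
  set d := ‖1 - conj a * w ζ‖
  have ha : ‖a‖ < 1 := mem_ball_zero_iff.1 (hmaps (mem_ball_self one_pos))
  have hζ1 : ‖ζ‖ < 1 := mem_ball_zero_iff.1 hζ
  have hschwarz := norm_sub_le_mul_norm_one_sub_conj_mul_of_mapsTo_ball hw hmaps hζ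
  have hid := norm_one_sub_conj_mul_sq_sub_norm_sub_sq a (w ζ)
  have hd : 1 - ‖a‖ ≤ d :=
    one_sub_norm_le_norm_one_sub_conj_mul a (mem_ball_zero_iff.1 (hmaps hζ)).le
  have hζ_pos : 0 < 1 - ‖ζ‖ ^ 2 := by nlinarith [norm_nonneg ζ]
  have hsq : ‖w ζ - a‖ ^ 2 ≤ ‖ζ‖ ^ 2 * d ^ 2 := by
    rw [← mul_pow]; exact pow_le_pow_left₀ (norm_nonneg _) hschwarz 2
  have key : (1 - ‖a‖) ^ 2 * (1 - ‖ζ‖ ^ 2) ≤ (1 - ‖a‖ ^ 2) * (1 - ‖w ζ‖ ^ 2) :=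
    calc (1 - ‖a‖) ^ 2 * (1 - ‖ζ‖ ^ 2) ≤ d ^ 2 * (1 - ‖ζ‖ ^ 2) := by
          gcongr
      _ ≤ d ^ 2 - ‖w ζ - a‖ ^ 2 := by linarith
      _ = (1 - ‖a‖ ^ 2) * (1 - ‖w ζ‖ ^ 2) := hid
  rw [div_le_div_iff₀ (by positivity) hζ_pos]
  nlinarith [norm_nonneg a]

end Complex

theorem stmt_0_general (w : ℂ → ℂ) (t₀ : ℂ)
    (hw : DifferentiableOn ℂ w (ball (0 : ℂ) 1))
    (hb : ∀ ζ ∈ ball (0 : ℂ) 1, ‖w ζ‖ ≤ 1)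
    (hlim : Filter.liminf
        (fun ζ : ℂ => (((1 - ‖w ζ‖ ^ 2) / (1 - ‖ζ‖ ^ 2) : ℝ) : EReal))
        (𝓝[ball (0 : ℂ) 1] t₀) = 0) :
    ∃ c : ℂ, ‖c‖ = 1 ∧ ∀ ζ ∈ ball (0 : ℂ) 1, w ζ = c := by
  by_cases hmax : ∃ z ∈ ball (0 : ℂ) 1, ‖w z‖ = 1
  · obtain ⟨z, hz, hz1⟩ := hmax
    have hmaxOn : IsMaxOn (norm ∘ w) (ball (0 : ℂ) 1) z := fun y hy => by
      simpa [hz1] using hb y hy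
    exact ⟨w z, hz1, fun ζ hζ => Complex.eqOn_of_isPreconnected_of_isMaxOn_norm
      (convex_ball (0 : ℂ) 1).isPreconnected isOpen_ball hw hz hmaxOn hζ⟩
  · push Not at hmax
    have hmaps : Set.MapsTo w (ball 0 1) (ball 0 1) := fun ζ hζ =>
      mem_ball_zero_iff.2 ((hb ζ hζ).lt_of_ne (hmax ζ hζ))
    have ha : ‖w 0‖ < 1 := mem_ball_zero_iff.1 (hmaps (mem_ball_self one_pos))
    have hbound : (((1 - ‖w 0‖) / (1 + ‖w 0‖) : ℝ) : EReal) ≤ 0 := by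
      rw [← hlim]
      refine le_liminf_of_le (by isBoundedDefault) ?_
      filter_upwards [self_mem_nhdsWithin] with ζ hζ
      exact EReal.coe_le_coe_iff.2 (Complex.div_le_one_sub_norm_sq_div_of_mapsTo_ball hw hmaps hζ)
    have : (1 - ‖w 0‖) / (1 + ‖w 0‖) ≤ 0 := by exact_mod_cast hbound
    exact ((div_pos (by linarith) (by positivity)).not_ge this).elim

/-- If `w` is analytic on the open unit disk with `‖w ζ‖ ≤ 1`, `t₀` is on the unit
circle, and `liminf_{ζ → t₀, ζ ∈ 𝔻} (1 - ‖w ζ‖²)/(1 - ‖ζ‖²) = 0`, then `w` is a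
constant function of modulus `1`. -/
theorem stmt_0 (w : ℂ → ℂ) (t₀ : ℂ)
    (hw : DifferentiableOn ℂ w (ball (0 : ℂ) 1))
    (hb : ∀ ζ ∈ ball (0 : ℂ) 1, ‖w ζ‖ ≤ 1)
    (ht₀ : ‖t₀‖ = 1)
    (hlim : Filter.liminf
        (fun ζ : ℂ => (((1 - ‖w ζ‖ ^ 2) / (1 - ‖ζ‖ ^ 2) : ℝ) : EReal))
        (𝓝[ball (0 : ℂ) 1] t₀) = 0) :
    ∃ c : ℂ, ‖c‖ = 1 ∧ ∀ ζ ∈ ball (0 : ℂ) 1, w ζ = c :=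
  stmt_0_general w t₀ hw hb hlim
end

section
/- If points ζ₁,…,ζₙ in the open unit disk and complex numbers w₁,…,wₙ are such that there exists an analytic function w on the disk with |w| ≤ 1 and w(ζₖ) = wₖ for all k, then the Pick matrix [(1 - conj(wₖ)wⱼ)/(1 - conj(ζₖ)ζⱼ)]_{k,j=1}^n is positive semidefinite. -/
/-!
Work on the circle of radius `r < 1`, where `k_a(z) = r² / (r² - ā z)` reproduces holomorphic
functions: `g(a) = (1/2π) ∫ g(re^{iθ}) conj (k_a(re^{iθ})) dθ` (Cauchy's formula).
For `x ∈ ℂⁿ` put `h = ∑ conj xₖ k_{ζₖ}` and `p = ∑ conj (wₖ xₖ) k_{ζₖ}`; then `2π` times the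
quadratic form of the Pick matrix built from `k` is `‖h‖² - ‖p‖²` in `L²` of the circle.
The reproducing property also gives `⟨f p, h⟩ = ‖p‖²`, and `|f| ≤ 1` gives `‖f p‖ ≤ ‖p‖`, so
`0 ≤ ‖f p - h‖² ≤ ‖h‖² - ‖p‖²`. Letting `r → 1` yields the Pick matrix itself, since positive
semidefiniteness is a closed condition.
-/

open Metric ComplexConjugate ComplexOrder Complex Finset Filter Topology Real Matrix MeasureTheory

/-- The reproducing kernel of the Hardy space of the disk of radius `r`, for `dθ / 2π` on its
boundary circle. -/
noncomputable def szegoKernel (r : ℝ) (a z : ℂ) : ℂ := r ^ 2 / (r ^ 2 - conj a * z)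

lemma ContinuousOn.continuous_comp_circleMap {E : Type*} [TopologicalSpace E] {g : ℂ → E}
    {c : ℂ} {R : ℝ}
    (hg : ContinuousOn g (closedBall c R)) (hR : 0 ≤ R) :
    Continuous fun θ ↦ g (circleMap c R θ) :=
  hg.comp_continuous (continuous_circleMap c R) (circleMap_mem_closedBall c hR)

section SzegoKernel

variable {r : ℝ} {a z : ℂ}

lemma szegoKernel_denom_ne_zero (ha : ‖a‖ < r) (hz : ‖z‖ ≤ r) :
    (r : ℂ) ^ 2 - conj a * z ≠ 0 := by
  rw [sub_ne_zero]
  intro h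
  have := congrArg norm h
  rw [norm_pow, norm_real, Real.norm_eq_abs, sq_abs, norm_mul, norm_conj] at this
  nlinarith [norm_nonneg a, norm_nonneg z]

lemma szegoKernel_one (a z : ℂ) : szegoKernel 1 a z = (1 - conj a * z)⁻¹ := by
  simp [szegoKernel]

lemma differentiableOn_szegoKernel (ha : ‖a‖ < r) :
    DifferentiableOn ℂ (szegoKernel r a) (closedBall 0 r) :=
  (differentiableOn_const _).div
    ((differentiableOn_const _).sub ((differentiableOn_const _).mul differentiableOn_id))
    fun _ hz ↦ szegoKernel_denom_ne_zero ha (mem_closedBall_zero_iff.mp hz)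

lemma continuousAt_szegoKernel_radius (h : (r : ℂ) ^ 2 - conj a * z ≠ 0) :
    ContinuousAt (fun s : ℝ ↦ szegoKernel s a z) r := by
  unfold szegoKernel
  fun_prop (disch := exact h)

lemma conj_szegoKernel_of_norm_eq (hz : ‖z‖ = r) : conj (szegoKernel r a z) = z / (z - a) := by
  rcases eq_or_ne z 0 with rfl | hz0
  · simp [szegoKernel, ← hz]
  have hr : (r : ℂ) ^ 2 = z * conj z := by
    rw [mul_conj, normSq_eq_norm_sq, hz]; push_cast; rfl
  simp only [szegoKernel, map_div₀, map_sub, map_mul, conj_conj, hr]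
  rw [mul_comm (conj z) z, ← sub_mul, mul_div_mul_right _ _ ((map_ne_zero _).mpr hz0)]

/-- On the circle `dz = i z dθ` and `z / (z - a) = conj (k_a z)`, so this is Cauchy's formula. -/
theorem integral_mul_conj_szegoKernel {g : ℂ → ℂ} (hg : DifferentiableOn ℂ g (closedBall 0 r))
    (ha : ‖a‖ < r) :
    ∫ θ in 0..2 * π, g (circleMap 0 r θ) * conj (szegoKernel r a (circleMap 0 r θ)) =
      2 * π * g a := by
  have hr : 0 ≤ r := (norm_nonneg a).trans ha.le
  have hcauchy := hg.circleIntegral_sub_inv_smul (mem_ball_zero_iff.mpr ha)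
  have hintegrand (θ : ℝ) :
      deriv (circleMap 0 r) θ • ((circleMap 0 r θ - a)⁻¹ • g (circleMap 0 r θ)) =
        I * (g (circleMap 0 r θ) * conj (szegoKernel r a (circleMap 0 r θ))) := by
    rw [conj_szegoKernel_of_norm_eq (by simp [abs_of_nonneg hr]), deriv_circleMap, smul_eq_mul,
      smul_eq_mul]
    ring
  simp only [circleIntegral, hintegrand, intervalIntegral.integral_const_mul] at hcauchy
  exact mul_left_cancel₀ I_ne_zero (hcauchy.trans (by rw [smul_eq_mul]; ring))

end SzegoKernel

noncomputable def circleNormSq (r : ℝ) (g : ℂ → ℂ) : ℝ :=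
  ∫ θ in 0..2 * π, normSq (g (circleMap 0 r θ))

section CircleNormSq

variable {r : ℝ}

lemma ofReal_circleNormSq (g : ℂ → ℂ) :
    (circleNormSq r g : ℂ) =
      ∫ θ in 0..2 * π, g (circleMap 0 r θ) * conj (g (circleMap 0 r θ)) := by
  simp only [circleNormSq, ← intervalIntegral.integral_ofReal, mul_conj]

lemma circleNormSq_sub {u v : ℂ → ℂ} (hu : Continuous fun θ ↦ u (circleMap 0 r θ))
    (hv : Continuous fun θ ↦ v (circleMap 0 r θ)) :
    circleNormSq r (u - v) = circleNormSq r u + circleNormSq r v -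
      2 * (∫ θ in 0..2 * π, u (circleMap 0 r θ) * conj (v (circleMap 0 r θ))).re := by
  have huv : Continuous fun θ ↦ u (circleMap 0 r θ) * conj (v (circleMap 0 r θ)) :=
    hu.mul (continuous_conj.comp hv)
  have hu2 : IntervalIntegrable (fun θ ↦ normSq (u (circleMap 0 r θ))) volume 0 (2 * π) :=
    (continuous_normSq.comp hu).intervalIntegrable _ _
  have hv2 : IntervalIntegrable (fun θ ↦ normSq (v (circleMap 0 r θ))) volume 0 (2 * π) :=
    (continuous_normSq.comp hv).intervalIntegrable _ _
  have huv_re : IntervalIntegrable (fun θ ↦ (u (circleMap 0 r θ) * conj (v (circleMap 0 r θ))).re)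
      volume 0 (2 * π) :=
    (continuous_re.comp huv).intervalIntegrable _ _
  have hre := intervalIntegral.intervalIntegral_re (huv.intervalIntegrable (μ := volume) 0 (2 * π))
  simp only [RCLike.re_to_complex] at hre
  simp only [circleNormSq, Pi.sub_apply, normSq_sub]
  rw [intervalIntegral.integral_sub (hu2.add hv2) (huv_re.const_mul 2),
    intervalIntegral.integral_add hu2 hv2, intervalIntegral.integral_const_mul, hre]

lemma circleNormSq_mul_le {u v : ℂ → ℂ} (hu : ∀ θ, ‖u (circleMap 0 r θ)‖ ≤ 1)
    (huv : Continuous fun θ ↦ (u * v) (circleMap 0 r θ))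
    (hv : Continuous fun θ ↦ v (circleMap 0 r θ)) :
    circleNormSq r (u * v) ≤ circleNormSq r v := by
  refine intervalIntegral.integral_mono_on two_pi_pos.le
    ((continuous_normSq.comp huv).intervalIntegrable _ _)
    ((continuous_normSq.comp hv).intervalIntegrable _ _) fun θ _ ↦ ?_
  rw [Pi.mul_apply, normSq_mul, normSq_eq_norm_sq (u _)]
  exact mul_le_of_le_one_left (normSq_nonneg _) (pow_le_one₀ (norm_nonneg _) (hu θ))

end CircleNormSq

section KernelSums

variable {ι : Type*} [Fintype ι] {r : ℝ} {ζ : ι → ℂ}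

theorem integral_mul_conj_sum_szegoKernel {g : ℂ → ℂ}
    (hg : DifferentiableOn ℂ g (closedBall 0 r)) (hζ : ∀ k, ‖ζ k‖ < r) (c : ι → ℂ) :
    ∫ θ in 0..2 * π,
        g (circleMap 0 r θ) * conj (∑ k, c k * szegoKernel r (ζ k) (circleMap 0 r θ)) =
      2 * π * ∑ k, conj (c k) * g (ζ k) := by
  simp only [map_sum, map_mul, mul_sum]
  rw [intervalIntegral.integral_finsetSum]
  · refine sum_congr rfl fun k _ ↦ ?_
    simp only [mul_left_comm _ (conj (c k)), intervalIntegral.integral_const_mul,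
      integral_mul_conj_szegoKernel hg (hζ k)]
  · intro k _
    have hr : 0 ≤ r := (norm_nonneg _).trans (hζ k).le
    have hk := (differentiableOn_szegoKernel (hζ k)).continuousOn.continuous_comp_circleMap hr
    exact ((hg.continuousOn.continuous_comp_circleMap hr).mul
      (continuous_const.mul (continuous_conj.comp hk))).intervalIntegrable _ _

lemma differentiableOn_sum_szegoKernel (hζ : ∀ k, ‖ζ k‖ < r) (c : ι → ℂ) :
    DifferentiableOn ℂ (fun z ↦ ∑ k, c k * szegoKernel r (ζ k) z) (closedBall 0 r) :=
  DifferentiableOn.fun_sum fun k _ ↦ (differentiableOn_szegoKernel (hζ k)).const_mul _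

/-- The adjoint of multiplication by `f` sends `k_a` to `conj (f a) • k_a`; it is a contraction
when `|f| ≤ 1`. -/
theorem circleNormSq_sum_conj_mul_szegoKernel_le {f : ℂ → ℂ}
    (hf : DifferentiableOn ℂ f (closedBall 0 r)) (hf1 : ∀ θ, ‖f (circleMap 0 r θ)‖ ≤ 1)
    (hr : 0 ≤ r) (hζ : ∀ k, ‖ζ k‖ < r) (c : ι → ℂ) :
    circleNormSq r (fun z ↦ ∑ k, conj (f (ζ k)) * c k * szegoKernel r (ζ k) z) ≤
      circleNormSq r (fun z ↦ ∑ k, c k * szegoKernel r (ζ k) z) := by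
  set h := fun z ↦ ∑ k, c k * szegoKernel r (ζ k) z
  set p := fun z ↦ ∑ k, conj (f (ζ k)) * c k * szegoKernel r (ζ k) z
  have hh : DifferentiableOn ℂ h (closedBall 0 r) := differentiableOn_sum_szegoKernel hζ c
  have hp : DifferentiableOn ℂ p (closedBall 0 r) := differentiableOn_sum_szegoKernel hζ _
  have hfp : DifferentiableOn ℂ (f * p) (closedBall 0 r) := hf.mul hp
  have hcross : ∫ θ in 0..2 * π, (f * p) (circleMap 0 r θ) * conj (h (circleMap 0 r θ)) =
      circleNormSq r p := by
    rw [ofReal_circleNormSq, integral_mul_conj_sum_szegoKernel hfp hζ,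
      integral_mul_conj_sum_szegoKernel hp hζ]
    simp only [Pi.mul_apply, map_mul, conj_conj]
    exact congrArg _ (sum_congr rfl fun k _ ↦ by ring)
  have hcont {g : ℂ → ℂ} (hg : DifferentiableOn ℂ g (closedBall 0 r)) :
      Continuous fun θ ↦ g (circleMap 0 r θ) :=
    hg.continuousOn.continuous_comp_circleMap hr
  have hmul : circleNormSq r (f * p) ≤ circleNormSq r p :=
    circleNormSq_mul_le hf1 (hcont hfp) (hcont hp)
  have hnonneg : 0 ≤ circleNormSq r (f * p - h) :=
    intervalIntegral.integral_nonneg two_pi_pos.le fun θ _ ↦ normSq_nonneg _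
  rw [circleNormSq_sub (hcont hfp) (hcont hh), hcross, ofReal_re] at hnonneg
  linarith

theorem posSemidef_pick_szegoKernel {f : ℂ → ℂ} (hf : DifferentiableOn ℂ f (closedBall 0 r))
    (hf1 : ∀ θ, ‖f (circleMap 0 r θ)‖ ≤ 1) (hr : 0 ≤ r) (hζ : ∀ k, ‖ζ k‖ < r) :
    (Matrix.of fun k j ↦
      (1 - conj (f (ζ k)) * f (ζ j)) * szegoKernel r (ζ k) (ζ j)).PosSemidef := by
  refine .of_dotProduct_mulVec_nonneg ?_ fun x ↦ ?_
  · ext k j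
    simp only [conjTranspose_apply, of_apply, RCLike.star_def, szegoKernel, map_mul,
      map_div₀, map_sub, map_one, map_pow, conj_ofReal, conj_conj]
    ring
  set h := fun z ↦ ∑ k, conj (x k) * szegoKernel r (ζ k) z
  set p := fun z ↦ ∑ k, conj (f (ζ k)) * conj (x k) * szegoKernel r (ζ k) z
  have hform : star x ⬝ᵥ (Matrix.of (fun k j ↦ (1 - conj (f (ζ k)) * f (ζ j)) *
      szegoKernel r (ζ k) (ζ j)) *ᵥ x) = ((circleNormSq r h - circleNormSq r p) / (2 * π) : ℝ) := by
    have hpi : (2 * π : ℂ) ≠ 0 := by exact_mod_cast two_pi_pos.ne'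
    push_cast
    rw [eq_div_iff hpi, ofReal_circleNormSq, ofReal_circleNormSq,
      integral_mul_conj_sum_szegoKernel (differentiableOn_sum_szegoKernel hζ _) hζ,
      integral_mul_conj_sum_szegoKernel (differentiableOn_sum_szegoKernel hζ _) hζ]
    simp only [dotProduct, mulVec, of_apply, Pi.star_apply, RCLike.star_def,
      map_mul, conj_conj, mul_sum, ← sum_sub_distrib, sum_mul]
    rw [sum_comm]
    exact sum_congr rfl fun k _ ↦ sum_congr rfl fun j _ ↦ by ring
  rw [hform, zero_le_real]
  exact div_nonneg (sub_nonneg.mpr (circleNormSq_sum_conj_mul_szegoKernel_le hf hf1 hr hζ _))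
    two_pi_pos.le

end KernelSums

theorem Matrix.PosSemidef.of_tendsto {ι R α : Type*} [Fintype ι] [CommRing R] [PartialOrder R]
    [StarRing R] [TopologicalSpace R] [IsTopologicalRing R] [ContinuousStar R]
    [OrderClosedTopology R] {l : Filter α} [l.NeBot] {M : α → Matrix ι ι R} {A : Matrix ι ι R}
    (hM : Tendsto M l (𝓝 A)) (hpos : ∀ᶠ a in l, (M a).PosSemidef) : A.PosSemidef := by
  refine .of_dotProduct_mulVec_nonneg ?_ fun x ↦ ?_
  · refine tendsto_nhds_unique ((continuous_id.matrix_conjTranspose.tendsto A).comp hM) ?_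
    exact hM.congr' (hpos.mono fun a ha ↦ ha.1.symm)
  · refine ge_of_tendsto (((continuous_const.dotProduct
      (continuous_id.matrix_mulVec continuous_const)).tendsto A).comp hM) ?_
    exact hpos.mono fun a ha ↦ ha.dotProduct_mulVec_nonneg x

theorem stmt_5_general (n : ℕ) (ζ w : Fin n → ℂ)
    (hζ : ∀ k, ζ k ∈ ball (0 : ℂ) 1)
    (hex : ∃ f : ℂ → ℂ, DifferentiableOn ℂ f (ball (0 : ℂ) 1) ∧
      (∀ z ∈ ball (0 : ℂ) 1, ‖f z‖ ≤ 1) ∧ ∀ k, f (ζ k) = w k) :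
    (Matrix.of fun k j : Fin n =>
      (1 - conj (w k) * w j) / (1 - conj (ζ k) * ζ j)).PosSemidef := by
  obtain ⟨f, hf, hf1, hfζ⟩ := hex
  obtain rfl : w = fun k ↦ f (ζ k) := funext fun k ↦ (hfζ k).symm
  replace hζ : ∀ k, ‖ζ k‖ < 1 := fun k ↦ mem_ball_zero_iff.mp (hζ k)
  refine Matrix.PosSemidef.of_tendsto (l := 𝓝[<] 1)
    (M := fun r ↦ Matrix.of fun k j ↦ (1 - conj (f (ζ k)) * f (ζ j)) * szegoKernel r (ζ k) (ζ j))
    ?_ ?_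
  · refine tendsto_pi_nhds.2 fun k ↦ tendsto_pi_nhds.2 fun j ↦ ?_
    simp only [of_apply, div_eq_mul_inv, ← szegoKernel_one]
    refine ((continuousAt_szegoKernel_radius ?_).tendsto.const_mul _).mono_left nhdsWithin_le_nhds
    simpa using szegoKernel_denom_ne_zero (hζ k) (hζ j).le
  · have hnear : ∀ᶠ r in 𝓝 (1 : ℝ), 0 ≤ r ∧ ∀ k, ‖ζ k‖ < r :=
      (eventually_ge_nhds one_pos).and (eventually_all.2 fun k ↦ eventually_gt_nhds (hζ k))
    filter_upwards [self_mem_nhdsWithin, nhdsWithin_le_nhds hnear] with r hr1 ⟨hr0, hrζ⟩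
    have hsub : closedBall (0 : ℂ) r ⊆ ball 0 1 := closedBall_subset_ball hr1
    exact posSemidef_pick_szegoKernel (hf.mono hsub)
      (fun θ ↦ hf1 _ (hsub (circleMap_mem_closedBall 0 hr0 θ))) hr0 hrζ

/-- If `ζ₁,…,ζₙ` are distinct points of the open unit disk and `w₁,…,wₙ` are complex
numbers such that some analytic `w : 𝔻 → ℂ` with `‖w‖ ≤ 1` interpolates
`w(ζₖ) = wₖ`, then the Pick matrix `[(1 - conj wₖ · wⱼ)/(1 - conj ζₖ · ζⱼ)]` is
positive semidefinite. -/
theorem stmt_5 (n : ℕ) (ζ w : Fin n → ℂ)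
    (hζ : ∀ k, ζ k ∈ ball (0 : ℂ) 1)
    (hinj : Function.Injective ζ)
    (hex : ∃ f : ℂ → ℂ, DifferentiableOn ℂ f (ball (0 : ℂ) 1) ∧
      (∀ z ∈ ball (0 : ℂ) 1, ‖f z‖ ≤ 1) ∧ ∀ k, f (ζ k) = w k) :
    (Matrix.of fun k j : Fin n =>
      (1 - conj (w k) * w j) / (1 - conj (ζ k) * ζ j)).PosSemidef :=
  stmt_5_general n ζ w hζ hex
end

section
/- Given Hilbert spaces H₀, E₁, E₂ and linear maps T₁, T₂ on a vector space X, M₁ : X → E₁, M₂ : X → E₂, and a positive semidefinite sesquilinear form D on X satisfying D(T₂x,T₂y) - D(T₁x,T₁y) = ⟨M₁x,M₁y⟩ - ⟨M₂x,M₂y⟩ for all x,y, the map V sending ([T₁x], M₁x) to ([T₂x], M₂x) (where [·] denotes the D-equivalence class in the Hilbert space completion H₀) is well-defined and isometric on its domain. -/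
open ComplexConjugate

/-!
A vector `z` with `[T₁z] = 0` and `M₁z = 0` has, by the fundamental identity at `(z, z)`,
`D(T₂z, T₂z) + ‖M₂z‖² = 0`; both terms are nonnegative, so `M₂z = 0` and `T₂z` is `D`-null.
By Cauchy–Schwarz for the semi-inner product `D`, a `D`-null vector is `D`-orthogonal to everything,
i.e. `[T₂z] = 0`. Applied to `z = x - x'` this is well-definedness; isometry is the real part of the
fundamental identity on the diagonal.
-/

section Form

variable {X : Type*} [AddCommGroup X]

theorem form_sub_left (D : X → X → ℂ) (hadd : ∀ x y z : X, D (x + y) z = D x z + D y z)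
    (a b y : X) : D (a - b) y = D a y - D b y :=
  map_sub (AddMonoidHom.mk' (D · y) (hadd · · y)) a b

variable [Module ℂ X]

abbrev preInnerProductCoreOfForm (D : X → X → ℂ)
    (hadd : ∀ x y z : X, D (x + y) z = D x z + D y z)
    (hsmul : ∀ (c : ℂ) (x y : X), D (c • x) y = conj c * D x y)
    (hherm : ∀ x y : X, D y x = conj (D x y))
    (hnonneg : ∀ x : X, 0 ≤ (D x x).re) : PreInnerProductSpace.Core ℂ X where
  inner := D
  conj_inner_symm x y := (hherm y x).symm
  re_inner_nonneg := hnonneg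
  add_left := hadd
  smul_left x y c := hsmul c x y

theorem PreInnerProductSpace.Core.inner_eq_zero_of_re_inner_self_eq_zero
    {𝕜 F : Type*} [RCLike 𝕜] [AddCommGroup F] [Module 𝕜 F] (c : PreInnerProductSpace.Core 𝕜 F)
    {x : F} (hx : RCLike.re (c.inner x x) = 0) (y : F) : c.inner x y = 0 := by
  have h := InnerProductSpace.Core.inner_mul_inner_self_le (c := c) x y
  rw [InnerProductSpace.Core.norm_inner_symm y x, ← sq, hx, zero_mul] at h
  exact norm_eq_zero.mp (pow_eq_zero_iff two_ne_zero |>.mp (le_antisymm h (sq_nonneg _)))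

theorem form_eq_zero_of_re_self_eq_zero (D : X → X → ℂ)
    (hadd : ∀ x y z : X, D (x + y) z = D x z + D y z)
    (hsmul : ∀ (c : ℂ) (x y : X), D (c • x) y = conj c * D x y)
    (hherm : ∀ x y : X, D y x = conj (D x y))
    (hnonneg : ∀ x : X, 0 ≤ (D x x).re) {a : X} (ha : (D a a).re = 0) (y : X) :
    D a y = 0 :=
  (preInnerProductCoreOfForm D hadd hsmul hherm hnonneg).inner_eq_zero_of_re_inner_self_eq_zero
    ha y

end Form

theorem re_add_norm_sq_eq_of_fundamental_identity
    {X E₁ E₂ : Type*} [AddCommGroup X] [Module ℂ X]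
    [NormedAddCommGroup E₁] [InnerProductSpace ℂ E₁]
    [NormedAddCommGroup E₂] [InnerProductSpace ℂ E₂]
    (D : X → X → ℂ) (T₁ T₂ : X → X) (M₁ : X → E₁) (M₂ : X → E₂)
    (hfund : ∀ x y : X,
      D (T₂ x) (T₂ y) - D (T₁ x) (T₁ y) =
        (inner ℂ (M₁ x) (M₁ y) : ℂ) - (inner ℂ (M₂ x) (M₂ y) : ℂ)) (x : X) :
    (D (T₂ x) (T₂ x)).re + ‖M₂ x‖ ^ 2 = (D (T₁ x) (T₁ x)).re + ‖M₁ x‖ ^ 2 := by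
  have h := congrArg Complex.re (hfund x x)
  have h₁ : (inner ℂ (M₁ x) (M₁ x)).re = ‖M₁ x‖ ^ 2 := inner_self_eq_norm_sq (𝕜 := ℂ) _
  have h₂ : (inner ℂ (M₂ x) (M₂ x)).re = ‖M₂ x‖ ^ 2 := inner_self_eq_norm_sq (𝕜 := ℂ) _
  rw [Complex.sub_re, Complex.sub_re, h₁, h₂] at h
  linarith

theorem stmt_11_general
    {X : Type*} [AddCommGroup X] [Module ℂ X]
    {E₁ E₂ : Type*}
    [NormedAddCommGroup E₁] [InnerProductSpace ℂ E₁]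
    [NormedAddCommGroup E₂] [InnerProductSpace ℂ E₂]
    (D : X → X → ℂ)
    (hadd₁ : ∀ x y z : X, D (x + y) z = D x z + D y z)
    (hsmul₁ : ∀ (c : ℂ) (x y : X), D (c • x) y = conj c * D x y)
    (hherm : ∀ x y : X, D y x = conj (D x y))
    (hpsd : ∀ x : X, 0 ≤ (D x x).re ∧ (D x x).im = 0)
    (T₁ T₂ : X →ₗ[ℂ] X) (M₁ : X →ₗ[ℂ] E₁) (M₂ : X →ₗ[ℂ] E₂)
    (hfund : ∀ x y : X,
      D (T₂ x) (T₂ y) - D (T₁ x) (T₁ y) =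
        (inner ℂ (M₁ x) (M₁ y) : ℂ) - (inner ℂ (M₂ x) (M₂ y) : ℂ)) :
    (∀ x x' : X,
      ((∀ y : X, D (T₁ x) y = D (T₁ x') y) ∧ M₁ x = M₁ x') →
      ((∀ y : X, D (T₂ x) y = D (T₂ x') y) ∧ M₂ x = M₂ x')) ∧
    (∀ x : X, (D (T₂ x) (T₂ x)).re + ‖M₂ x‖ ^ 2 = (D (T₁ x) (T₁ x)).re + ‖M₁ x‖ ^ 2) := by
  have hiso := re_add_norm_sq_eq_of_fundamental_identity D T₁ T₂ M₁ M₂ hfund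
  refine ⟨fun x x' ⟨hT₁, hM₁⟩ => ?_, hiso⟩
  have hT₁z : D (T₁ (x - x')) (T₁ (x - x')) = 0 := by
    rw [map_sub, form_sub_left D hadd₁, hT₁, sub_self]
  have hM₁z : M₁ (x - x') = 0 := by rw [map_sub, hM₁, sub_self]
  have hnull : (D (T₂ (x - x')) (T₂ (x - x'))).re = 0 ∧ M₂ (x - x') = 0 := by
    have h := hiso (x - x')
    rw [hT₁z, hM₁z, Complex.zero_re, norm_zero] at h
    have hD := (hpsd (T₂ (x - x'))).1
    have hM := sq_nonneg ‖M₂ (x - x')‖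
    exact ⟨by linarith, norm_eq_zero.mp (pow_eq_zero_iff two_ne_zero |>.mp (by linarith))⟩
  refine ⟨fun y => ?_, ?_⟩
  · have h := form_eq_zero_of_re_self_eq_zero D hadd₁ hsmul₁ hherm (fun x => (hpsd x).1) hnull.1 y
    rwa [map_sub, form_sub_left D hadd₁, sub_eq_zero] at h
  · rw [← sub_eq_zero, ← map_sub]
    exact hnull.2

/-- Given a complex vector space `X`, a positive semidefinite sesquilinear form `D`
on `X` (conjugate-linear in the first argument), linear maps `T₁, T₂ : X → X`,
`M₁ : X → E₁`, `M₂ : X → E₂` into Hilbert spaces satisfying the fundamental identity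
`D(T₂x,T₂y) - D(T₁x,T₁y) = ⟨M₁x,M₁y⟩ - ⟨M₂x,M₂y⟩`, the map
`V : ([T₁x], M₁x) ↦ ([T₂x], M₂x)` is well defined (it respects `D`-equivalence) and
isometric on its domain. -/
theorem stmt_11
    {X : Type*} [AddCommGroup X] [Module ℂ X]
    {E₁ E₂ : Type*}
    [NormedAddCommGroup E₁] [InnerProductSpace ℂ E₁] [CompleteSpace E₁]
    [NormedAddCommGroup E₂] [InnerProductSpace ℂ E₂] [CompleteSpace E₂]
    (D : X → X → ℂ)
    (hadd₁ : ∀ x y z : X, D (x + y) z = D x z + D y z)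
    (hsmul₁ : ∀ (c : ℂ) (x y : X), D (c • x) y = conj c * D x y)
    (hadd₂ : ∀ x y z : X, D x (y + z) = D x y + D x z)
    (hsmul₂ : ∀ (c : ℂ) (x y : X), D x (c • y) = c * D x y)
    (hherm : ∀ x y : X, D y x = conj (D x y))
    (hpsd : ∀ x : X, 0 ≤ (D x x).re ∧ (D x x).im = 0)
    (T₁ T₂ : X →ₗ[ℂ] X) (M₁ : X →ₗ[ℂ] E₁) (M₂ : X →ₗ[ℂ] E₂)
    (hfund : ∀ x y : X,
      D (T₂ x) (T₂ y) - D (T₁ x) (T₁ y) =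
        (inner ℂ (M₁ x) (M₁ y) : ℂ) - (inner ℂ (M₂ x) (M₂ y) : ℂ)) :
    (∀ x x' : X,
      ((∀ y : X, D (T₁ x) y = D (T₁ x') y) ∧ M₁ x = M₁ x') →
      ((∀ y : X, D (T₂ x) y = D (T₂ x') y) ∧ M₂ x = M₂ x')) ∧
    (∀ x : X, (D (T₂ x) (T₂ x)).re + ‖M₂ x‖ ^ 2 = (D (T₁ x) (T₁ x)).re + ‖M₁ x‖ ^ 2) :=
  stmt_11_general D hadd₁ hsmul₁ hherm hpsd T₁ T₂ M₁ M₂ hfund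
end
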